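/- arXiv:1105.3053 — 2 statements merged into one kernel-verified Lean document; each statement's English description precedes it below -/
import Mathlib

section
/- Let ξ₁,…,ξ_k be nonzero vectors in ℝ^d satisfying only condition (ii): there is no ω ∈ ℝ^d with ⟨ω,ξᵢ⟩ > 0 for all i. Then for any real numbers f(ξ₁),…,f(ξ_k), min_{γ∈ℝ^d} max_i [f(ξᵢ) − ⟨ξᵢ,γ⟩] equals the maximum of Σᵢ pᵢ f(ξᵢ) over all extreme points p of the convex set of risk-neutral probability laws on {ξ₁,…,ξ_k}; these extreme points have support either on families of size d+1 in general position in ℝ^d, or on families of size m+1 with m < d that lie in an m-dimensional subspace and are in general position within that subspace. -/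
/-!
The minimax identity is linear-programming duality. Weak duality comes from
`∑ pᵢ ⟪ξᵢ, γ⟫ = ⟪∑ pᵢ ξᵢ, γ⟫ = 0` for a risk-neutral law `p`. Strong duality, and the existence of
a risk-neutral law under condition (ii) (Gordan's alternative), both follow from Farkas' lemma:
a point outside a finitely generated cone can be separated from it, because such a cone is closed
by the conic Carathéodory theorem. The risk-neutral laws form a compact convex set, so the linear
functional `p ↦ ∑ pᵢ f(ξᵢ)` attains its maximum at an extreme point.

At an extreme point `p` of `{p ≥ 0 | ∑ pᵢ (ξᵢ, 1) = (0, 1)}` the vectors `(ξᵢ, 1)`, `i ∈ supp p`,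
are linearly independent, since otherwise `p` could be moved both ways along a relation. Hence
every relation among the `ξᵢ`, `i ∈ supp p`, is a multiple of `p`, which vanishes nowhere on the
support: proper subfamilies are independent and `|supp p| = dim span {ξᵢ} + 1`.
-/

noncomputable section

/-- Standard inner product on ℝ^d. -/
def dotp {d : ℕ} (u v : Fin d → ℝ) : ℝ := ∑ i, u i * v i

open Function Set Filter Topology Module Submodule

section LinearIndependence

variable {ι E : Type*} [Fintype ι] [AddCommGroup E] [Module ℝ E] {v : ι → E} {s : Set ι}

theorem Fintype.linearIndepOn_iff :
    LinearIndepOn ℝ v s ↔ ∀ c : ι → ℝ, (∀ i ∉ s, c i = 0) → ∑ i, c i • v i = 0 → c = 0 := by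
  classical
  have hsum : ∀ c : ι → ℝ, (∀ i ∉ s, c i = 0) → ∑ i ∈ s.toFinset, c i • v i = ∑ i, c i • v i :=
    fun c hc => Finset.sum_subset (Finset.subset_univ _) fun i _ hi => by
      simp [hc i (by simpa using hi)]
  rw [linearIndepOn_iff'']
  refine ⟨fun h c hc h0 => funext fun i => ?_, fun h t c hts hct h0 i hi => ?_⟩
  · by_cases hi : i ∈ s
    · exact h s.toFinset c (by simp) (by simpa using hc) (by rwa [hsum c hc]) i
        (by simpa using hi)
    · exact hc i hi
  · have hc : ∀ i ∉ s, c i = 0 := fun i hi => hct i fun hit => hi (hts hit)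
    refine congrFun (h c hc ?_) i
    rwa [← Finset.sum_subset (Finset.subset_univ t) fun i _ hi => by simp [hct i hi]]

theorem linearIndepOn_iff_ncard_le_finrank_span :
    LinearIndepOn ℝ v s ↔ s.ncard ≤ finrank ℝ (span ℝ (v '' s)) := by
  classical
  rw [LinearIndepOn, linearIndependent_iff_card_le_finrank_span, Set.finrank, image_eq_range,
    ← Nat.card_eq_fintype_card, Nat.card_coe_set_eq]

end LinearIndependence

section Cone

variable {ι E : Type*} [Fintype ι] [AddCommGroup E] [Module ℝ E]

theorem exists_nonneg_support_ssubset_of_not_linearIndepOn {w : ι → E} {q : ι → ℝ} (hq : 0 ≤ q)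
    (hw : ¬ LinearIndepOn ℝ w (support q)) :
    ∃ r : ι → ℝ, 0 ≤ r ∧ ∑ i, r i • w i = ∑ i, q i • w i ∧ support r ⊂ support q := by
  obtain ⟨c, hcq, hcw, hc⟩ : ∃ c : ι → ℝ, (∀ i ∉ support q, c i = 0) ∧ ∑ i, c i • w i = 0 ∧
      ∃ j, 0 < c j := by
    simp only [Fintype.linearIndepOn_iff, not_forall] at hw
    obtain ⟨c, hcq, hcw, hc⟩ := hw
    obtain ⟨j, hj⟩ := ne_iff.1 hc
    rcases hj.lt_or_gt with hneg | hpos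
    · exact ⟨-c, fun i hi => by simp [hcq i hi], by simp [hcw], j, by simpa using hneg⟩
    · exact ⟨c, hcq, hcw, j, hpos⟩
  -- move from `q` along `-c` until the first coordinate vanishes
  obtain ⟨i₀, hi₀, hmin⟩ := (Finset.univ.filter (0 < c ·)).exists_min_image (fun i => q i / c i)
    (by simpa [Finset.filter_nonempty_iff] using hc)
  rw [Finset.mem_filter] at hi₀
  set t := q i₀ / c i₀
  have ht : 0 ≤ t := div_nonneg (hq i₀) hi₀.2.le
  refine ⟨q - t • c, fun i => ?_, ?_, ?_⟩
  · rcases le_or_gt (c i) 0 with hci | hci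
    · simpa using (hq i).trans (le_sub_self_iff _ |>.2 (mul_nonpos_of_nonneg_of_nonpos ht hci))
    · have := hmin i (by simpa using hci)
      simpa [le_div_iff₀ hci] using this
  · simp [sub_smul, Finset.sum_sub_distrib, mul_smul, ← Finset.smul_sum, hcw]
  · refine ssubset_of_subset_of_ne (fun i hi => ?_) fun h => ?_
    · by_contra hqi
      simp [hcq i hqi, show q i = 0 by simpa using hqi] at hi
    · have hqi₀ : i₀ ∈ support q := by_contra fun h => (hcq i₀ h ▸ hi₀.2).false
      rw [← h] at hqi₀
      simp [t, div_mul_cancel₀ _ hi₀.2.ne'] at hqi₀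

theorem exists_nonneg_linearIndepOn_support (w : ι → E) {q : ι → ℝ} (hq : 0 ≤ q) :
    ∃ r : ι → ℝ, 0 ≤ r ∧ ∑ i, r i • w i = ∑ i, q i • w i ∧ LinearIndepOn ℝ w (support r) := by
  induction hn : (support q).ncard using Nat.strong_induction_on generalizing q with
  | _ n ih =>
    by_cases hw : LinearIndepOn ℝ w (support q)
    · exact ⟨q, hq, rfl, hw⟩
    obtain ⟨r, hr, hrq, hsub⟩ := exists_nonneg_support_ssubset_of_not_linearIndepOn hq hw
    obtain ⟨s, hs, hsr, hw'⟩ := ih _ (hn ▸ Set.ncard_lt_ncard hsub) hr rfl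
    exact ⟨s, hs, hsr.trans hrq, hw'⟩

variable [TopologicalSpace E] [IsTopologicalAddGroup E] [ContinuousSMul ℝ E] [T2Space E]

theorem isClosed_linearCombination_image_nonneg (w : ι → E) :
    IsClosed (Fintype.linearCombination ℝ w '' {q | 0 ≤ q}) := by
  set Λ := Fintype.linearCombination ℝ w
  let U : Set ι → Submodule ℝ (ι → ℝ) := fun s => Submodule.pi sᶜ fun _ => ⊥
  have hU : ∀ {s q}, q ∈ U s ↔ ∀ i ∉ s, q i = 0 := by simp [U, Submodule.mem_pi]
  have hcover : Λ '' {q | 0 ≤ q} = ⋃ s ∈ {s | LinearIndepOn ℝ w s}, Λ '' ({q | 0 ≤ q} ∩ U s) := by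
    refine Subset.antisymm ?_ (iUnion₂_subset fun s _ => image_mono inter_subset_left)
    rintro _ ⟨q, hq, rfl⟩
    obtain ⟨r, hr, hrq, hw⟩ := exists_nonneg_linearIndepOn_support w hq
    refine mem_biUnion hw ⟨r, ⟨hr, hU.2 fun i => notMem_support.1⟩, ?_⟩
    simp [Λ, Fintype.linearCombination_apply, hrq]
  rw [hcover]
  refine (toFinite _).isClosed_biUnion fun s hs => ?_
  have hinj : LinearMap.ker (Λ.domRestrict (U s)) = ⊥ := by
    refine LinearMap.ker_eq_bot'.2 fun q hq => Subtype.ext ?_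
    refine Fintype.linearIndepOn_iff.1 hs q (hU.1 q.2) ?_
    simpa [Λ, Fintype.linearCombination_apply] using hq
  have himage : Λ '' ({q | 0 ≤ q} ∩ U s) =
      Λ.domRestrict (U s) '' (((↑) : U s → ι → ℝ) ⁻¹' {q | 0 ≤ q}) := by
    rw [inter_comm, ← Subtype.image_preimage_coe, image_image]
    rfl
  rw [himage]
  exact (LinearMap.isClosedEmbedding_of_injective hinj).isClosedMap _
    (isClosed_Ici.preimage continuous_subtype_val)

theorem farkas [LocallyConvexSpace ℝ E] (v : ι → E) (b : ι → ℝ)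
    (h : ∀ q : ι → ℝ, 0 ≤ q → ∑ i, q i • v i = 0 → ∑ i, q i * b i ≤ 0) :
    ∃ φ : StrongDual ℝ E, ∀ i, b i ≤ φ (v i) := by
  classical
  set Λ := Fintype.linearCombination ℝ fun i => (v i, b i)
  let C : ProperCone ℝ (E × ℝ) :=
    { toSubmodule := (PointedCone.positive ℝ (ι → ℝ)).map Λ
      isClosed' := by
        simpa [Set.Ici] using isClosed_linearCombination_image_nonneg fun i => (v i, b i) }
  have hmem : ∀ x, x ∈ C ↔ ∃ q : ι → ℝ, 0 ≤ q ∧ ∑ i, q i • v i = x.1 ∧ ∑ i, q i * b i = x.2 := by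
    intro x
    change x ∈ Λ '' {q | 0 ≤ q} ↔ _
    simp [Λ, Fintype.linearCombination_apply, Prod.ext_iff, Prod.fst_sum, Prod.snd_sum]
  obtain ⟨f, hfC, hf⟩ := C.hyperplane_separation_point (x₀ := ((0 : E), (1 : ℝ))) fun h0 => by
    obtain ⟨q, hq, hv, hb⟩ := (hmem _).1 h0
    linarith [h q hq hv]
  refine ⟨(-f (0, 1))⁻¹ • f.comp (ContinuousLinearMap.inl ℝ E ℝ), fun i => ?_⟩
  have hi : 0 ≤ f (v i, b i) := hfC _ ((hmem _).2
    ⟨Pi.single i 1, by simp [Pi.single_nonneg], by simp, by simp [Pi.single_apply]⟩)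
  have hsplit : f (v i, b i) = f (v i, 0) + b i * f (0, 1) := by
    rw [← smul_eq_mul, ← map_smul, ← map_add]; simp
  rw [smul_apply, smul_eq_mul, ← div_eq_inv_mul, le_div_iff₀ (by linarith)]
  simp only [ContinuousLinearMap.coe_comp, comp_apply, ContinuousLinearMap.inl_apply]
  linarith

end Cone

section Polyhedron

variable {ι F : Type*} [Fintype ι] [AddCommGroup F] [Module ℝ F]

theorem eventually_nonneg_add_smul {p c : ι → ℝ} (hp : 0 ≤ p) (hc : ∀ i ∉ support p, c i = 0) :
    ∀ᶠ t in 𝓝 (0 : ℝ), 0 ≤ p + t • c := by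
  refine eventually_all.2 fun i => ?_
  by_cases hi : p i = 0
  · simp [hi, hc i (notMem_support.2 hi)]
  · have hlim : Tendsto (fun t : ℝ => p i + t * c i) (𝓝 0) (𝓝 (p i)) := by
      simpa using ((continuous_mul_const (c i)).const_add (p i)).tendsto 0
    exact (hlim.eventually (lt_mem_nhds ((hp i).lt_of_ne' hi))).mono fun t ht => by
      simpa using ht.le

theorem linearIndepOn_support_of_mem_extremePoints {v : ι → F} {b : F} {p : ι → ℝ}
    (hp : p ∈ {q : ι → ℝ | 0 ≤ q ∧ ∑ i, q i • v i = b}.extremePoints ℝ) :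
    LinearIndepOn ℝ v (support p) := by
  obtain ⟨⟨hp0, hpb⟩, hext⟩ := hp
  refine Fintype.linearIndepOn_iff.2 fun c hc hcv => ?_
  have hmem : ∀ t : ℝ, 0 ≤ p + t • c → p + t • c ∈ {q : ι → ℝ | 0 ≤ q ∧ ∑ i, q i • v i = b} :=
    fun t ht => ⟨ht, by
      simp [add_smul, Finset.sum_add_distrib, mul_smul, ← Finset.smul_sum, hpb, hcv]⟩
  obtain ⟨ε, hε, hball⟩ := Metric.eventually_nhds_iff.1 (eventually_nonneg_add_smul hp0 hc)
  have hhalf : |ε / 2| < ε := by rw [abs_of_pos (half_pos hε)]; exact half_lt_self hε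
  have hseg : p ∈ openSegment ℝ (p + (ε / 2) • c) (p + (-(ε / 2)) • c) :=
    ⟨1 / 2, 1 / 2, by norm_num, by norm_num, by norm_num, by module⟩
  have := hext (hmem _ (hball (by rwa [Real.dist_0_eq_abs])))
    (hmem _ (hball (by rwa [Real.dist_0_eq_abs, abs_neg]))) hseg
  simpa [hε.ne'] using this

end Polyhedron

theorem IsCompact.exists_mem_extremePoints_isMaxOn {E : Type*} [AddCommGroup E] [Module ℝ E]
    [TopologicalSpace E] [T2Space E] [IsTopologicalAddGroup E] [ContinuousSMul ℝ E]
    [LocallyConvexSpace ℝ E] {A : Set E} (hA : IsCompact A) (hne : A.Nonempty)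
    (l : StrongDual ℝ E) : ∃ x ∈ A.extremePoints ℝ, IsMaxOn l A x := by
  obtain ⟨x, hxA, hx⟩ := hA.exists_isMaxOn hne l.continuous.continuousOn
  have hexp : IsExposed ℝ A (l.toExposed A) := ContinuousLinearMap.toExposed.isExposed
  obtain ⟨y, hy⟩ := (hexp.isCompact hA).extremePoints_nonempty ⟨x, hxA, isMaxOn_iff.1 hx⟩
  exact ⟨y, hexp.isExtreme.extremePoints_subset_extremePoints hy,
    isMaxOn_iff.2 (extremePoints_subset hy).2⟩

section RiskNeutral

variable {ι E : Type*} [Fintype ι] [AddCommGroup E] [Module ℝ E] (ξ : ι → E)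

def riskNeutralLaws : Set (ι → ℝ) :=
  {p | (∀ i, 0 ≤ p i) ∧ ∑ i, p i = 1 ∧ ∑ i, p i • ξ i = 0}

theorem riskNeutralLaws_eq :
    riskNeutralLaws ξ = {p | 0 ≤ p ∧ ∑ i, p i • (ξ i, (1 : ℝ)) = (0, 1)} := by
  ext p
  simp [riskNeutralLaws, Pi.le_def, Prod.ext_iff, Prod.fst_sum, Prod.snd_sum, and_comm]

theorem isCompact_riskNeutralLaws [TopologicalSpace E] [ContinuousAdd E] [ContinuousSMul ℝ E]
    [T2Space E] : IsCompact (riskNeutralLaws ξ) := by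
  have hclosed : IsClosed (riskNeutralLaws ξ) := by
    simp only [riskNeutralLaws, ofPred_and, ofPred_forall]
    exact (isClosed_iInter fun i => isClosed_le continuous_const (continuous_apply i)).inter
      ((isClosed_eq (by fun_prop) continuous_const).inter
        (isClosed_eq (by fun_prop) continuous_const))
  refine (isCompact_Icc (a := 0) (b := 1)).of_isClosed_subset hclosed
    fun p hp => ⟨hp.1, fun i => ?_⟩
  simpa [hp.2.1] using Finset.single_le_sum (fun j _ => hp.1 j) (Finset.mem_univ i)

variable {ξ} {p : ι → ℝ}

theorem support_nonempty_of_mem_riskNeutralLaws (hp : p ∈ riskNeutralLaws ξ) :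
    (support p).Nonempty := by
  obtain ⟨j, -, hj⟩ := Finset.exists_ne_zero_of_sum_ne_zero (hp.2.1 ▸ one_ne_zero)
  exact ⟨j, hj⟩

theorem sum_mul_nonpos_of_forall_mem_riskNeutralLaws {b : ι → ℝ}
    (h : ∀ p ∈ riskNeutralLaws ξ, ∑ i, p i * b i ≤ 0) {q : ι → ℝ} (hq : 0 ≤ q)
    (hqξ : ∑ i, q i • ξ i = 0) : ∑ i, q i * b i ≤ 0 := by
  set s := ∑ i, q i
  rcases (Finset.sum_nonneg fun i _ => hq i : 0 ≤ s).eq_or_lt with hs | hs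
  · have hq0 : q = 0 := funext fun i =>
      (Finset.sum_eq_zero_iff_of_nonneg fun j _ => hq j).1 hs.symm i (Finset.mem_univ i)
    simp [hq0]
  · have hnorm : s⁻¹ • q ∈ riskNeutralLaws ξ := by
      refine ⟨fun i => mul_nonneg (inv_nonneg.2 hs.le) (hq i), ?_, ?_⟩
      · simp [← Finset.mul_sum, hs.ne', s]
      · simp [mul_smul, ← Finset.smul_sum, hqξ]
    have := h _ hnorm
    simp only [Pi.smul_apply, smul_eq_mul, mul_assoc, ← Finset.mul_sum] at this
    exact nonpos_of_mul_nonpos_right this (inv_pos.2 hs)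

theorem linearIndepOn_support_of_mem_extremePoints_riskNeutralLaws
    (hp : p ∈ (riskNeutralLaws ξ).extremePoints ℝ) :
    LinearIndepOn ℝ (fun i => (ξ i, (1 : ℝ))) (support p) :=
  linearIndepOn_support_of_mem_extremePoints (riskNeutralLaws_eq ξ ▸ hp)

theorem linearIndepOn_of_ssubset_support (hp : p ∈ riskNeutralLaws ξ)
    (hind : LinearIndepOn ℝ (fun i => (ξ i, (1 : ℝ))) (support p)) {T : Set ι}
    (hT : T ⊂ support p) : LinearIndepOn ℝ ξ T := by
  refine Fintype.linearIndepOn_iff.2 fun c hc hcξ => ?_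
  have hcp : c = (∑ i, c i) • p := by
    -- `c - (∑ i, c i) • p` is a relation among the `(ξ i, 1)`, `i ∈ support p`
    refine sub_eq_zero.1 (Fintype.linearIndepOn_iff.1 hind _ (fun i hi => ?_) ?_)
    · simp [hc i fun h => hi (hT.subset h), notMem_support.1 hi]
    · simp [Prod.ext_iff, Prod.fst_sum, Prod.snd_sum, sub_smul, mul_smul, Finset.sum_sub_distrib,
        ← Finset.smul_sum, ← Finset.mul_sum, hcξ, hp.2.1, hp.2.2]
  obtain ⟨j, hjp, hjT⟩ := exists_of_ssubset hT
  have hsum : ∑ i, c i = 0 := by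
    have := congrFun hcp j
    simpa [hc j hjT, mem_support.1 hjp] using this.symm
  rw [hcp, hsum, zero_smul]

theorem ncard_support_eq_finrank_add_one (hp : p ∈ riskNeutralLaws ξ)
    (hind : LinearIndepOn ℝ (fun i => (ξ i, (1 : ℝ))) (support p)) :
    (support p).ncard = finrank ℝ (span ℝ (ξ '' support p)) + 1 := by
  obtain ⟨j, hj⟩ := support_nonempty_of_mem_riskNeutralLaws hp
  have hdep : ¬ LinearIndepOn ℝ ξ (support p) := fun h => mem_support.1 hj <|
    congrFun (Fintype.linearIndepOn_iff.1 h p (fun i => notMem_support.1) hp.2.2) j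
  have hlt := not_le.1 (mt linearIndepOn_iff_ncard_le_finrank_span.2 hdep)
  have : FiniteDimensional ℝ (span ℝ (ξ '' support p)) :=
    FiniteDimensional.span_of_finite ℝ (toFinite _)
  have hle : (support p \ {j}).ncard ≤ finrank ℝ (span ℝ (ξ '' support p)) :=
    (linearIndepOn_iff_ncard_le_finrank_span.1 (linearIndepOn_of_ssubset_support hp hind
      (sdiff_singleton_ssubset.2 hj))).trans
      (Submodule.finrank_mono (span_mono (image_mono sdiff_subset)))
  have := ncard_sdiff_singleton_add_one hj (toFinite _)
  omega

end RiskNeutral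

section Euclidean

variable {ι : Type*} [Fintype ι] {d : ℕ} {ξ : ι → Fin d → ℝ} {p : ι → ℝ}

theorem dotp_comm (u v : Fin d → ℝ) : dotp u v = dotp v u := dotProduct_comm u v

theorem sum_mul_dotp_eq_zero (hp : ∑ i, p i • ξ i = 0) (γ : Fin d → ℝ) :
    ∑ i, p i * dotp (ξ i) γ = 0 := by
  change ∑ i, p i * (ξ i ⬝ᵥ γ) = 0
  simp_rw [← smul_eq_mul, ← smul_dotProduct, ← sum_dotProduct, hp, zero_dotProduct]

theorem exists_dotp_eq (φ : StrongDual ℝ (Fin d → ℝ)) : ∃ γ, ∀ x, φ x = dotp x γ :=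
  ⟨fun j => φ fun i => if j = i then 1 else 0, fun x => by
    simpa [dotp, mul_comm] using (φ : (Fin d → ℝ) →ₗ[ℝ] ℝ).pi_apply_eq_sum_univ x⟩

theorem farkas_dotp (v : ι → Fin d → ℝ) (b : ι → ℝ)
    (h : ∀ q : ι → ℝ, 0 ≤ q → ∑ i, q i • v i = 0 → ∑ i, q i * b i ≤ 0) :
    ∃ γ, ∀ i, b i ≤ dotp (v i) γ := by
  obtain ⟨φ, hφ⟩ := farkas v b h
  obtain ⟨γ, hγ⟩ := exists_dotp_eq φ
  exact ⟨γ, fun i => hγ (v i) ▸ hφ i⟩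

theorem riskNeutralLaws_nonempty (hii : ¬ ∃ ω, ∀ i, 0 < dotp ω (ξ i)) :
    (riskNeutralLaws ξ).Nonempty := by
  by_contra hempty
  obtain ⟨γ, hγ⟩ := farkas_dotp ξ (fun _ => 1) fun q hq hqξ =>
    sum_mul_nonpos_of_forall_mem_riskNeutralLaws (fun p hp => (hempty ⟨p, hp⟩).elim) hq hqξ
  exact hii ⟨γ, fun i => by rw [dotp_comm]; linarith [hγ i]⟩

theorem sum_mul_le_iSup_sub_dotp (hp : p ∈ riskNeutralLaws ξ) (f : ι → ℝ) (γ : Fin d → ℝ) :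
    ∑ i, p i * f i ≤ ⨆ i, (f i - dotp (ξ i) γ) :=
  calc ∑ i, p i * f i = ∑ i, p i * (f i - dotp (ξ i) γ) := by
        simp [mul_sub, Finset.sum_sub_distrib, sum_mul_dotp_eq_zero hp.2.2]
    _ ≤ ∑ i, p i * ⨆ j, (f j - dotp (ξ j) γ) := Finset.sum_le_sum fun i _ =>
        mul_le_mul_of_nonneg_left (le_ciSup (f := fun j => f j - dotp (ξ j) γ)
          (finite_range _).bddAbove i) (hp.1 i)
    _ = ⨆ j, (f j - dotp (ξ j) γ) := by rw [← Finset.sum_mul, hp.2.1, one_mul]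

theorem exists_forall_sub_dotp_le {f : ι → ℝ} {V : ℝ}
    (hV : ∀ p ∈ riskNeutralLaws ξ, ∑ i, p i * f i ≤ V) : ∃ γ, ∀ i, f i - dotp (ξ i) γ ≤ V := by
  obtain ⟨γ, hγ⟩ := farkas_dotp ξ (fun i => f i - V) fun q hq hqξ =>
    sum_mul_nonpos_of_forall_mem_riskNeutralLaws (fun p hp => by
      simp only [mul_sub, Finset.sum_sub_distrib, ← Finset.sum_mul, hp.2.1]
      linarith [hV p hp]) hq hqξ
  exact ⟨γ, fun i => by linarith [hγ i]⟩

theorem exists_isLeast_iSup_sub_dotp_isGreatest_extremePoints (f : ι → ℝ)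
    (hii : ¬ ∃ ω, ∀ i, 0 < dotp ω (ξ i)) :
    ∃ V : ℝ, IsLeast (range fun γ : Fin d → ℝ => ⨆ i, (f i - dotp (ξ i) γ)) V ∧
      IsGreatest ((fun p : ι → ℝ => ∑ i, p i * f i) '' (riskNeutralLaws ξ).extremePoints ℝ) V := by
  let l : StrongDual ℝ (ι → ℝ) := LinearMap.toContinuousLinearMap (Fintype.linearCombination ℝ f)
  have hl : ∀ p, l p = ∑ i, p i * f i := fun p => by simp [l, Fintype.linearCombination_apply]
  obtain ⟨p₀, hp₀, hmax⟩ := (isCompact_riskNeutralLaws ξ).exists_mem_extremePoints_isMaxOn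
    (riskNeutralLaws_nonempty hii) l
  have hV : ∀ p ∈ riskNeutralLaws ξ, ∑ i, p i * f i ≤ ∑ i, p₀ i * f i := fun p hp => by
    simpa [hl] using isMaxOn_iff.1 hmax p hp
  have : Nonempty ι := (support_nonempty_of_mem_riskNeutralLaws hp₀.1).to_subtype.map (↑)
  obtain ⟨γ₀, hγ₀⟩ := exists_forall_sub_dotp_le hV
  refine ⟨_, ⟨⟨γ₀, le_antisymm (ciSup_le hγ₀) (sum_mul_le_iSup_sub_dotp hp₀.1 f γ₀)⟩, ?_⟩,
    ⟨p₀, hp₀, rfl⟩, ?_⟩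
  · rintro _ ⟨γ, rfl⟩
    exact sum_mul_le_iSup_sub_dotp hp₀.1 f γ
  · rintro _ ⟨p, hp, rfl⟩
    exact hV p hp.1

theorem not_forall_pos_dotp_of_mem_riskNeutralLaws (hp : p ∈ riskNeutralLaws ξ) (ω : Fin d → ℝ) :
    ¬ ∀ i ∈ support p, 0 < dotp ω (ξ i) := by
  intro hpos
  have hterm : ∀ i, 0 ≤ p i * dotp ω (ξ i) := fun i => by
    by_cases hi : p i = 0
    · simp [hi]
    · exact (mul_pos ((hp.1 i).lt_of_ne' hi) (hpos i hi)).le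
  have hsum : ∑ i, p i * dotp ω (ξ i) = 0 := by
    simpa only [dotp_comm ω] using sum_mul_dotp_eq_zero hp.2.2 ω
  obtain ⟨j, hj⟩ := support_nonempty_of_mem_riskNeutralLaws hp
  exact (mul_pos ((hp.1 j).lt_of_ne' hj) (hpos j hj)).ne'
    ((Finset.sum_eq_zero_iff_of_nonneg fun i _ => hterm i).1 hsum j (Finset.mem_univ j))

theorem exists_subspace_of_mem_extremePoints_riskNeutralLaws
    (hp : p ∈ (riskNeutralLaws ξ).extremePoints ℝ) :
    ∃ (m : ℕ) (W : Submodule ℝ (Fin d → ℝ)), m ≤ d ∧ finrank ℝ W = m ∧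
      (∀ i ∈ support p, ξ i ∈ W) ∧ (support p).ncard = m + 1 ∧
      (∀ T : Set ι, T ⊆ support p → T.ncard = m → LinearIndependent ℝ (fun i : T => ξ i)) ∧
      ¬ ∃ ω ∈ W, ∀ i ∈ support p, 0 < dotp ω (ξ i) := by
  have hind := linearIndepOn_support_of_mem_extremePoints_riskNeutralLaws hp
  have hcard := ncard_support_eq_finrank_add_one hp.1 hind
  refine ⟨_, span ℝ (ξ '' support p), (finrank_le _).trans (finrank_fin_fun ℝ).le, rfl,
    fun i hi => subset_span (mem_image_of_mem ξ hi), hcard,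
    fun T hT hTcard => linearIndepOn_of_ssubset_support hp.1 hind (hT.ssubset_of_ne ?_),
    fun ⟨ω, _, hω⟩ => not_forall_pos_dotp_of_mem_riskNeutralLaws hp.1 ω hω⟩
  rintro rfl
  omega

end Euclidean

theorem stmt9_general (d k : ℕ) (ξ : Fin k → (Fin d → ℝ)) (f : Fin k → ℝ)
    -- only condition (ii): no ω has positive inner product with all the ξᵢ
    (hii : ¬ ∃ ω : Fin d → ℝ, ∀ i, 0 < dotp ω (ξ i)) :
    -- the convex set of risk-neutral probability laws on {ξ₁,…,ξ_k}
    let RN : Set (Fin k → ℝ) :=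
      { p | (∀ i, 0 ≤ p i) ∧ (∑ i, p i = 1) ∧ (∑ i, p i • ξ i = 0) }
    -- the minimax equals the maximum over extreme risk-neutral laws
    (∃ V : ℝ,
      IsLeast (Set.range fun γ : Fin d → ℝ => ⨆ i, (f i - dotp (ξ i) γ)) V ∧
      IsGreatest ((fun p : Fin k → ℝ => ∑ i, p i * f i) '' RN.extremePoints ℝ) V) ∧
    -- description of the supports of the extreme points: a family of size m+1 lying in an
    -- m-dimensional subspace (m ≤ d) and in general position within that subspace
    (∀ p ∈ RN.extremePoints ℝ, ∃ (m : ℕ) (W : Submodule ℝ (Fin d → ℝ)),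
      m ≤ d ∧ Module.finrank ℝ W = m ∧
      (∀ i ∈ Function.support p, ξ i ∈ W) ∧
      (Function.support p).ncard = m + 1 ∧
      (∀ T : Set (Fin k), T ⊆ Function.support p → T.ncard = m →
        LinearIndependent ℝ (fun i : T => ξ i)) ∧
      ¬ ∃ ω ∈ W, ∀ i ∈ Function.support p, 0 < dotp ω (ξ i)) :=
  ⟨exists_isLeast_iSup_sub_dotp_isGreatest_extremePoints f hii,
    fun _ hp => exists_subspace_of_mem_extremePoints_riskNeutralLaws hp⟩

theorem stmt9 (d k : ℕ) (ξ : Fin k → (Fin d → ℝ)) (f : Fin k → ℝ)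
    (hne : ∀ i, ξ i ≠ 0)
    -- only condition (ii): no ω has positive inner product with all the ξᵢ
    (hii : ¬ ∃ ω : Fin d → ℝ, ∀ i, 0 < dotp ω (ξ i)) :
    -- the convex set of risk-neutral probability laws on {ξ₁,…,ξ_k}
    let RN : Set (Fin k → ℝ) :=
      { p | (∀ i, 0 ≤ p i) ∧ (∑ i, p i = 1) ∧ (∑ i, p i • ξ i = 0) }
    -- the minimax equals the maximum over extreme risk-neutral laws
    (∃ V : ℝ,
      IsLeast (Set.range fun γ : Fin d → ℝ => ⨆ i, (f i - dotp (ξ i) γ)) V ∧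
      IsGreatest ((fun p : Fin k → ℝ => ∑ i, p i * f i) '' RN.extremePoints ℝ) V) ∧
    -- description of the supports of the extreme points: a family of size m+1 lying in an
    -- m-dimensional subspace (m ≤ d) and in general position within that subspace
    (∀ p ∈ RN.extremePoints ℝ, ∃ (m : ℕ) (W : Submodule ℝ (Fin d → ℝ)),
      m ≤ d ∧ Module.finrank ℝ W = m ∧
      (∀ i ∈ Function.support p, ξ i ∈ W) ∧
      (Function.support p).ncard = m + 1 ∧
      (∀ T : Set (Fin k), T ⊆ Function.support p → T.ncard = m →
        LinearIndependent ℝ (fun i : T => ξ i)) ∧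
      ¬ ∃ ω ∈ W, ∀ i ∈ Function.support p, 0 < dotp ω (ξ i)) :=
  stmt9_general d k ξ f hii
end
end

section
/- Let ξ₁,…,ξ_k (k > d) be vectors in ℝ^d in general position ((i): no d linearly dependent; (ii): no ω with ⟨ω,ξᵢ⟩ > 0 for all i). Let g : ℝ^d → ℝ be a non-negative Lipschitz function having directional derivatives D_y g(x) at every point x in every direction y, such that for every subfamily {ξᵢ : i∈I} not satisfying (ii) one can choose ω with ⟨ω,ξᵢ⟩ > 0 for all i∈I and ⟨ξᵢ,ω⟩ > D_ω g(γ) for all i∈I and all γ ∈ ℝ^d. Then for any real numbers f(ξ₁),…,f(ξ_k), the minimum over γ ∈ ℝ^d of max_i [f(ξᵢ) − ⟨ξᵢ,γ⟩ + g(γ)] is finite, is attained at some γ₀, and equals max_I [𝔼_I f(ξ) + g(γ_I)], where the max is over subsets I of size d+1 whose convex hull contains 0 in its interior, 𝔼_I is the expectation under the unique risk-neutral probability on {ξᵢ : i∈I}, and γ_I is the corresponding unique optimal γ for the unperturbed problem on {ξᵢ : i∈I}. In particular, for k = d+1 the minimizer γ₀ coincides with the minimizer for g = 0 and the value equals the unperturbed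 value plus g(γ₀). -/
/-!
The perturbed objective `γ ↦ max_i [f ξᵢ - ⟨ξᵢ, γ⟩] + g γ` is continuous, and it is coercive
because (i) and (ii) put `0` inside a simplex spanned by `d + 1` of the `ξᵢ`; so it has a
minimiser `γ₀`. At a minimiser no `ω` can be positive on all active `ξᵢ`: the hypothesis on `g`
would make `γ₀ + ε ω` better to first order. By Gordan's alternative `0` lies in the convex hull of
the active `ξᵢ`, and Carathéodory together with (i) yields an active simplex `I` with `0` in its
interior. The risk-neutral law of `I` averages payoffs that all equal the maximum at `γ₀`, so
`𝔼_I f + g γ₀` is the minimum and `γ₀` is the unique unperturbed minimiser on `I`. Conversely,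
for any such simplex `I` the same first-order argument shows that the perturbed minimiser on `I`
activates all of `I`, hence is `γ_I`; so `𝔼_I f + g γ_I` is the perturbed minimum over `I`, which
is at most the one over all indices.
-/

noncomputable section

/-- Euclidean norm on ℝ^d. -/
def euclNorm {d : ℕ} (u : Fin d → ℝ) : ℝ := Real.sqrt (∑ i, (u i) ^ 2)

open Filter Topology Finset Matrix

lemma continuous_of_abs_sub_le_mul_euclNorm {d : ℕ} {g : (Fin d → ℝ) → ℝ} {C : ℝ}
    (hg : ∀ x y, |g x - g y| ≤ C * euclNorm (x - y)) : Continuous g := by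
  refine continuous_iff_continuousAt.2 fun x => tendsto_iff_norm_sub_tendsto_zero.2 ?_
  refine squeeze_zero (fun _ => norm_nonneg _) (fun y => hg y x) ?_
  have : Continuous fun y => C * euclNorm (y - x) := by unfold euclNorm; fun_prop
  simpa [euclNorm] using this.tendsto x

lemma exists_pos_mul_norm_le {E : Type*} [NormedAddCommGroup E] [NormedSpace ℝ E] [ProperSpace E]
    {φ : E → ℝ} (hφ : Continuous φ) (hhom : ∀ t : ℝ, 0 ≤ t → ∀ x, φ (t • x) = t * φ x)
    (hpos : ∀ x ≠ 0, 0 < φ x) : ∃ c > 0, ∀ x, c * ‖x‖ ≤ φ x := by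
  obtain ⟨c, hc, hcφ⟩ := (isCompact_sphere (0 : E) 1).exists_forall_le' hφ.continuousOn
    fun x hx => hpos x (ne_zero_of_mem_unit_sphere ⟨x, hx⟩)
  refine ⟨c, hc, fun x => ?_⟩
  rcases eq_or_ne x 0 with rfl | hx
  · simpa using (hhom 0 le_rfl 0).ge
  · have hx' : 0 < ‖x‖ := norm_pos_iff.2 hx
    have hu : ‖x‖⁻¹ • x ∈ Metric.sphere (0 : E) 1 := by
      simp [norm_smul, hx'.ne']
    calc c * ‖x‖ ≤ φ (‖x‖⁻¹ • x) * ‖x‖ := by gcongr; exact hcφ _ hu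
      _ = φ x := by rw [hhom _ (inv_nonneg.2 hx'.le), mul_comm, ← mul_assoc,
        mul_inv_cancel₀ hx'.ne', one_mul]

section HedgedMax

variable {ι : Type*} {d : ℕ} (ξ : ι → Fin d → ℝ) (f : ι → ℝ)

-- For empty `s` this is the junk value `sSup ∅ = 0`.
def hedgedMax (s : Finset ι) (γ : Fin d → ℝ) : ℝ := ⨆ i : s, (f i - ξ i ⬝ᵥ γ)

open Classical in
def activeSet (s : Finset ι) (γ : Fin d → ℝ) : Finset ι :=
  s.filter fun i => f i - ξ i ⬝ᵥ γ = hedgedMax ξ f s γ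

variable {ξ f} {s t : Finset ι} {γ : Fin d → ℝ}

lemma mem_activeSet {i : ι} :
    i ∈ activeSet ξ f s γ ↔ i ∈ s ∧ f i - ξ i ⬝ᵥ γ = hedgedMax ξ f s γ := by
  classical
  simp [activeSet]

lemma activeSet_subset : activeSet ξ f s γ ⊆ s := fun _ hi => (mem_activeSet.1 hi).1

lemma le_hedgedMax {i : ι} (hi : i ∈ s) : f i - ξ i ⬝ᵥ γ ≤ hedgedMax ξ f s γ :=
  le_ciSup (f := fun i : s => f i - ξ i ⬝ᵥ γ) (Set.finite_range _).bddAbove ⟨i, hi⟩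

lemma hedgedMax_le (hs : s.Nonempty) {c : ℝ} (h : ∀ i ∈ s, f i - ξ i ⬝ᵥ γ ≤ c) :
    hedgedMax ξ f s γ ≤ c :=
  have := hs.to_subtype
  ciSup_le fun i => h i i.2

lemma exists_eq_hedgedMax (hs : s.Nonempty) (γ : Fin d → ℝ) :
    ∃ i ∈ s, f i - ξ i ⬝ᵥ γ = hedgedMax ξ f s γ := by
  have := hs.to_subtype
  obtain ⟨i, hi⟩ := exists_eq_ciSup_of_finite (f := fun i : s => f i - ξ i ⬝ᵥ γ)
  exact ⟨i, i.2, hi⟩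

lemma hedgedMax_eq_of_forall_eq (hs : s.Nonempty) {c : ℝ} (h : ∀ i ∈ s, f i - ξ i ⬝ᵥ γ = c) :
    hedgedMax ξ f s γ = c := by
  obtain ⟨i, hi⟩ := hs
  exact le_antisymm (hedgedMax_le ⟨i, hi⟩ fun j hj => (h j hj).le)
    ((h i hi).ge.trans (le_hedgedMax hi))

lemma hedgedMax_mono (hs : s.Nonempty) (hst : s ⊆ t) (γ : Fin d → ℝ) :
    hedgedMax ξ f s γ ≤ hedgedMax ξ f t γ :=
  hedgedMax_le hs fun _ hi => le_hedgedMax (hst hi)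

lemma continuous_hedgedMax (hs : s.Nonempty) : Continuous (hedgedMax ξ f s) := by
  have := hs.to_subtype
  have h : hedgedMax ξ f s = fun γ => univ.sup' univ_nonempty fun i : s => f i - ξ i ⬝ᵥ γ := by
    ext γ
    rw [Finset.sup'_univ_eq_ciSup]
    rfl
  rw [h]
  exact Continuous.finset_sup'_apply _ fun i _ => by fun_prop

lemma hedgedMax_zero_smul {c : ℝ} (hc : 0 ≤ c) (γ : Fin d → ℝ) :
    hedgedMax ξ 0 s (c • γ) = c * hedgedMax ξ 0 s γ := by
  simp only [hedgedMax, Real.mul_iSup_of_nonneg hc, dotProduct_smul, smul_eq_mul, Pi.zero_apply,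
    zero_sub, mul_neg]

lemma add_hedgedMax_zero_le (hs : s.Nonempty) {m : ℝ} (hm : ∀ i ∈ s, m ≤ f i) (γ : Fin d → ℝ) :
    m + hedgedMax ξ 0 s γ ≤ hedgedMax ξ f s γ := by
  rw [← le_sub_iff_add_le']
  refine hedgedMax_le hs fun i hi => ?_
  have := le_hedgedMax (ξ := ξ) (f := f) (γ := γ) hi
  simp only [Pi.zero_apply]
  linarith [hm i hi]

variable [Fintype ι]

lemma hedgedMax_univ (γ : Fin d → ℝ) : hedgedMax ξ f univ γ = ⨆ i, (f i - ξ i ⬝ᵥ γ) :=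
  (Equiv.subtypeUnivEquiv mem_univ).iSup_comp (g := fun i => f i - ξ i ⬝ᵥ γ)

lemma iSup_add_eq_hedgedMax_add [Nonempty ι] (γ : Fin d → ℝ) (c : ℝ) :
    ⨆ i, (f i - ξ i ⬝ᵥ γ + c) = hedgedMax ξ f univ γ + c := by
  rw [hedgedMax_univ, ciSup_add (Set.finite_range _).bddAbove]

end HedgedMax

section RiskNeutral

variable {ι : Type*} [Fintype ι] {d : ℕ} {ξ : ι → Fin d → ℝ} {f : ι → ℝ}

structure IsRiskNeutral (ξ : ι → Fin d → ℝ) (s : Finset ι) (q : ι → ℝ) : Prop where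
  nonneg : ∀ i, 0 ≤ q i
  eq_zero_of_notMem : ∀ i ∉ s, q i = 0
  sum_eq_one : ∑ i, q i = 1
  sum_smul_eq_zero : ∑ i, q i • ξ i = 0

namespace IsRiskNeutral

variable {s : Finset ι} {q : ι → ℝ}

lemma sum_finset_mul (hq : IsRiskNeutral ξ s q) (F : ι → ℝ) :
    ∑ i ∈ s, q i * F i = ∑ i, q i * F i :=
  sum_subset (subset_univ s) fun i _ hi => by rw [hq.eq_zero_of_notMem i hi, zero_mul]

lemma sum_finset_eq_one (hq : IsRiskNeutral ξ s q) : ∑ i ∈ s, q i = 1 := by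
  simpa [hq.sum_eq_one] using hq.sum_finset_mul 1

lemma nonempty (hq : IsRiskNeutral ξ s q) : s.Nonempty :=
  nonempty_of_sum_ne_zero (hq.sum_finset_eq_one.trans_ne one_ne_zero)

lemma expectation_sub_dotProduct (hq : IsRiskNeutral ξ s q) (γ : Fin d → ℝ) :
    ∑ i, q i * (f i - ξ i ⬝ᵥ γ) = ∑ i, q i * f i := by
  have h : ∑ i, q i * (ξ i ⬝ᵥ γ) = 0 := by
    simpa only [sum_dotProduct, smul_dotProduct, smul_eq_mul, zero_dotProduct]
      using congrArg (· ⬝ᵥ γ) hq.sum_smul_eq_zero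
  simp only [mul_sub, sum_sub_distrib, h, sub_zero]

lemma expectation_le_hedgedMax (hq : IsRiskNeutral ξ s q) (γ : Fin d → ℝ) :
    ∑ i, q i * f i ≤ hedgedMax ξ f s γ := by
  rw [← hq.expectation_sub_dotProduct γ, ← hq.sum_finset_mul]
  calc ∑ i ∈ s, q i * (f i - ξ i ⬝ᵥ γ) ≤ ∑ i ∈ s, q i * hedgedMax ξ f s γ :=
        sum_le_sum fun i hi => mul_le_mul_of_nonneg_left (le_hedgedMax hi) (hq.nonneg i)
    _ = hedgedMax ξ f s γ := by rw [← sum_mul, hq.sum_finset_eq_one, one_mul]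

lemma expectation_eq (hq : IsRiskNeutral ξ s q) {γ : Fin d → ℝ} {c : ℝ}
    (h : ∀ i ∈ s, f i - ξ i ⬝ᵥ γ = c) : ∑ i, q i * f i = c := by
  rw [← hq.expectation_sub_dotProduct γ, ← hq.sum_finset_mul,
    sum_congr rfl fun i hi => by rw [h i hi], ← sum_mul, hq.sum_finset_eq_one, one_mul]

lemma hedgedMax_le_of_forall_eq (hq : IsRiskNeutral ξ s q) {γ₀ : Fin d → ℝ} {c : ℝ}
    (h : ∀ i ∈ s, f i - ξ i ⬝ᵥ γ₀ = c) (γ : Fin d → ℝ) :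
    hedgedMax ξ f s γ₀ ≤ hedgedMax ξ f s γ := by
  rw [hedgedMax_eq_of_forall_eq hq.nonempty h, ← hq.expectation_eq h]
  exact hq.expectation_le_hedgedMax γ

lemma forall_eq_of_hedgedMax_le (hq : IsRiskNeutral ξ s q) (hpos : ∀ i ∈ s, 0 < q i)
    {γ : Fin d → ℝ} (h : hedgedMax ξ f s γ ≤ ∑ i, q i * f i) :
    ∀ i ∈ s, f i - ξ i ⬝ᵥ γ = ∑ i, q i * f i := by
  have hle : ∀ i ∈ s, q i * (f i - ξ i ⬝ᵥ γ) ≤ q i * ∑ j, q j * f j := fun i hi =>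
    mul_le_mul_of_nonneg_left ((le_hedgedMax hi).trans h) (hq.nonneg i)
  have hsum : ∑ i ∈ s, q i * (f i - ξ i ⬝ᵥ γ) = ∑ i ∈ s, q i * ∑ j, q j * f j := by
    rw [hq.sum_finset_mul, hq.expectation_sub_dotProduct, ← sum_mul, hq.sum_finset_eq_one, one_mul]
  exact fun i hi => mul_left_cancel₀ (hpos i hi).ne' ((sum_eq_sum_iff_of_le hle).1 hsum i hi)

end IsRiskNeutral

end RiskNeutral

section GeneralPosition

variable {ι : Type*} {d : ℕ} {ξ : ι → Fin d → ℝ}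

lemma linearIndepOn_of_card_le [Fintype ι] (hk : d ≤ Fintype.card ι)
    (hi : ∀ s : Finset ι, s.card = d → LinearIndependent ℝ (fun i : s => ξ i))
    {s : Finset ι} (hs : s.card ≤ d) : LinearIndepOn ℝ ξ s := by
  classical
  obtain ⟨t, hst, htd⟩ := exists_superset_card_eq hs (by simpa using hk)
  have ht : LinearIndepOn ℝ ξ t := hi t htd
  exact ht.mono (by simpa using hst)

lemma eq_of_forall_dotProduct_eq
    (hi : ∀ s : Finset ι, s.card = d → LinearIndependent ℝ (fun i : s => ξ i))
    {s : Finset ι} (hs : d ≤ s.card) {γ γ' : Fin d → ℝ} (h : ∀ i ∈ s, ξ i ⬝ᵥ γ = ξ i ⬝ᵥ γ') :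
    γ = γ' := by
  classical
  obtain ⟨t, hts, htd⟩ := exists_subset_card_eq hs
  have hspan := (hi t htd).span_eq_top_of_card_eq_finrank' (by simp [htd])
  have : dotProductEquiv ℝ (Fin d) (γ - γ') = 0 := LinearMap.ext_on_range hspan fun i => by
    simp [dotProduct_comm _ (ξ _), h i (hts i.2)]
  simpa [sub_eq_zero] using this

lemma IsRiskNeutral.lt_card [Fintype ι] (hk : d ≤ Fintype.card ι)
    (hi : ∀ s : Finset ι, s.card = d → LinearIndependent ℝ (fun i : s => ξ i))
    {s : Finset ι} {q : ι → ℝ} (hq : IsRiskNeutral ξ s q) : d < s.card := by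
  by_contra! hs
  have hzero := linearIndepOn_finset_iff.1 (linearIndepOn_of_card_le hk hi hs) q <| by
    rw [← hq.sum_smul_eq_zero]
    exact sum_subset (subset_univ s) fun i _ hi => by rw [hq.eq_zero_of_notMem i hi, zero_smul]
  simpa [sum_congr rfl hzero] using hq.sum_finset_eq_one

lemma IsRiskNeutral.eq_of_hedgedMax_le_of_forall_eq [Fintype ι] {f : ι → ℝ}
    (hi : ∀ s : Finset ι, s.card = d → LinearIndependent ℝ (fun i : s => ξ i))
    {s : Finset ι} {q : ι → ℝ} (hq : IsRiskNeutral ξ s q) (hpos : ∀ i ∈ s, 0 < q i)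
    (hs : d ≤ s.card) {γ₀ : Fin d → ℝ} {c : ℝ} (h₀ : ∀ i ∈ s, f i - ξ i ⬝ᵥ γ₀ = c)
    {γ : Fin d → ℝ} (hγ : hedgedMax ξ f s γ ≤ hedgedMax ξ f s γ₀) : γ = γ₀ := by
  have hc := hq.expectation_eq h₀
  rw [hedgedMax_eq_of_forall_eq hq.nonempty h₀, ← hc] at hγ
  have h := hq.forall_eq_of_hedgedMax_le hpos hγ
  exact eq_of_forall_dotProduct_eq hi hs fun i hi => by linarith [h i hi, h₀ i hi]

end GeneralPosition

section ConvexGeometry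

variable {d : ℕ}

lemma zero_mem_convexHull_of_not_exists_pos {ι : Type*} (ξ : ι → Fin d → ℝ) (A : Finset ι)
    (h : ¬∃ ω : Fin d → ℝ, ∀ i ∈ A, 0 < ω ⬝ᵥ ξ i) :
    (0 : Fin d → ℝ) ∈ convexHull ℝ (ξ '' A) := by
  by_contra h0
  obtain ⟨φ, u, hφ0, hφ⟩ := geometric_hahn_banach_point_closed (convex_convexHull ℝ _)
    ((A.finite_toSet.image ξ).isCompact_convexHull (𝕜 := ℝ)).isClosed h0
  set ω := (dotProductEquiv ℝ (Fin d)).symm φ.toLinearMap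
  have hω : ∀ x, φ x = ω ⬝ᵥ x := fun x => by
    rw [← dotProductEquiv_apply_apply, LinearEquiv.apply_symm_apply]; rfl
  refine h ⟨ω, fun i hi => ?_⟩
  have := hφ (ξ i) (subset_convexHull ℝ _ ⟨i, hi, rfl⟩)
  rw [map_zero] at hφ0
  rw [← hω]
  linarith

lemma exists_dotProduct_neg_of_zero_mem_interior {S : Set (Fin d → ℝ)}
    (h : (0 : Fin d → ℝ) ∈ interior (convexHull ℝ S)) {ω : Fin d → ℝ} (hω : ω ≠ 0) :
    ∃ x ∈ S, x ⬝ᵥ ω < 0 := by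
  by_contra! hS
  have hlin : IsLinearMap ℝ fun x : Fin d → ℝ => x ⬝ᵥ ω :=
    ⟨fun x y => add_dotProduct x y ω, fun c x => smul_dotProduct c x ω⟩
  have hsub : convexHull ℝ S ⊆ {x | 0 ≤ x ⬝ᵥ ω} :=
    convexHull_min hS (convex_halfSpace_ge hlin 0)
  have hlim : Tendsto (fun t : ℝ => t • -ω) (𝓝[>] 0) (𝓝 0) :=
    tendsto_nhdsWithin_of_tendsto_nhds
      ((continuous_id.smul continuous_const).tendsto' 0 0 (by simp))
  obtain ⟨t, ht, htpos⟩ :=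
    ((hlim.eventually (mem_interior_iff_mem_nhds.1 h)).and self_mem_nhdsWithin).exists
  have h1 : 0 ≤ (t • -ω) ⬝ᵥ ω := hsub ht
  have h2 : 0 < ω ⬝ᵥ ω := by simpa using dotProduct_star_self_pos_iff.2 hω
  simp only [smul_dotProduct, neg_dotProduct, smul_eq_mul] at h1
  nlinarith [mul_pos (Set.mem_Ioi.1 htpos) h2]

lemma sum_smul_mem_interior_convexHull {κ E : Type*} [Fintype κ] [NormedAddCommGroup E]
    [NormedSpace ℝ E] [FiniteDimensional ℝ E] {z : κ → E} (hz : AffineIndependent ℝ z)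
    (hcard : Fintype.card κ = Module.finrank ℝ E + 1) {w : κ → ℝ} (hw : ∀ j, 0 < w j)
    (hw1 : ∑ j, w j = 1) : ∑ j, w j • z j ∈ interior (convexHull ℝ (Set.range z)) := by
  let b : AffineBasis κ ℝ E :=
    ⟨z, hz, hz.affineSpan_eq_top_iff_card_eq_finrank_add_one.2 hcard⟩
  have hb : ⇑b = z := rfl
  rw [← hb, b.interior_convexHull, ← Finset.affineCombination_eq_linear_combination _ _ _ hw1]
  exact fun j => (b.coord_apply_combination_of_mem (mem_univ j) hw1).symm ▸ hw j

end ConvexGeometry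

section SimplexExtraction

variable {ι : Type*} [Fintype ι] {d : ℕ} {ξ : ι → Fin d → ℝ}

lemma isRiskNeutral_sum_ite [DecidableEq ι] {κ : Type*} [Fintype κ] (σ : κ → ι) {w : κ → ℝ}
    (hw : ∀ j, 0 ≤ w j) (hw1 : ∑ j, w j = 1) (hwξ : ∑ j, w j • ξ (σ j) = 0) :
    IsRiskNeutral ξ (univ.image σ) fun i => ∑ j, if σ j = i then w j else 0 where
  nonneg i := sum_nonneg fun j _ => by split_ifs <;> simp [hw j]
  eq_zero_of_notMem i hi := sum_eq_zero fun j _ =>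
    if_neg fun h : σ j = i => hi (h ▸ mem_image_of_mem σ (mem_univ j))
  sum_eq_one := by rw [sum_comm]; simpa using hw1
  sum_smul_eq_zero := by simp_rw [sum_smul, ite_smul, zero_smul]; rw [sum_comm]; simpa using hwξ

lemma exists_simplex_of_zero_mem_convexHull (hk : d ≤ Fintype.card ι)
    (hi : ∀ s : Finset ι, s.card = d → LinearIndependent ℝ (fun i : s => ξ i))
    {A : Finset ι} (h : (0 : Fin d → ℝ) ∈ convexHull ℝ (ξ '' A)) :
    ∃ I ⊆ A, I.card = d + 1 ∧ (0 : Fin d → ℝ) ∈ interior (convexHull ℝ (ξ '' I)) ∧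
      ∃ q, IsRiskNeutral ξ I q ∧ ∀ i ∈ I, 0 < q i := by
  classical
  -- Carathéodory: `0` is a positive combination of affinely independent points `z j = ξ (σ j)`.
  obtain ⟨κ, _, z, w, hzA, hz, hw, hw1, hwz⟩ := eq_pos_convex_span_of_mem_convexHull h
  choose σ hσA hσz using fun j => hzA (Set.mem_range_self j)
  have hσ : Function.Injective σ := fun a b hab => hz.injective (by rw [← hσz a, ← hσz b, hab])
  have hq := isRiskNeutral_sum_ite (ξ := ξ) σ (fun j => (hw j).le) hw1
    (by simpa only [hσz] using hwz)
  have hcardI : (univ.image σ).card = Fintype.card κ := card_image_of_injective _ hσ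
  have hcard : Fintype.card κ = d + 1 := by
    refine le_antisymm ?_ (hcardI ▸ hq.lt_card hk hi)
    calc Fintype.card κ ≤ Module.finrank ℝ (vectorSpan ℝ (Set.range z)) + 1 :=
          hz.card_le_finrank_succ
      _ ≤ d + 1 := by gcongr; simpa using Submodule.finrank_le (vectorSpan ℝ (Set.range z))
  have hrange : ξ '' ↑(univ.image σ) = Set.range z := by
    ext; simp [hσz]
  refine ⟨univ.image σ, ?_, hcardI.trans hcard, ?_, _, hq, ?_⟩
  · simpa [image_subset_iff] using hσA
  · rw [hrange, ← hwz]
    exact sum_smul_mem_interior_convexHull hz (by simpa using hcard) hw hw1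
  · simp only [mem_image, mem_univ, true_and, forall_exists_index, forall_apply_eq_imp_iff]
    exact fun j => sum_pos' (fun j' _ => by split_ifs <;> simp [(hw j').le])
      ⟨j, mem_univ j, by simpa using hw j⟩

lemma exists_dotProduct_neg_of_not_exists_pos (hk : d ≤ Fintype.card ι)
    (hi : ∀ s : Finset ι, s.card = d → LinearIndependent ℝ (fun i : s => ξ i))
    (hii : ¬∃ ω : Fin d → ℝ, ∀ i, 0 < ω ⬝ᵥ ξ i) {ω : Fin d → ℝ} (hω : ω ≠ 0) :
    ∃ i, ξ i ⬝ᵥ ω < 0 := by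
  obtain ⟨I, -, -, hint, -⟩ := exists_simplex_of_zero_mem_convexHull hk hi
    (zero_mem_convexHull_of_not_exists_pos ξ univ fun ⟨ω', hω'⟩ =>
      hii ⟨ω', fun i => hω' i (mem_univ i)⟩)
  obtain ⟨_, ⟨i, -, rfl⟩, h⟩ := exists_dotProduct_neg_of_zero_mem_interior hint hω
  exact ⟨i, h⟩

end SimplexExtraction

section Perturbation

variable {ι : Type*} {d : ℕ} {ξ : ι → Fin d → ℝ} {f : ι → ℝ} {g : (Fin d → ℝ) → ℝ}
  {s : Finset ι}

lemma exists_forall_hedgedMax_add_le (hs : s.Nonempty)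
    (hneg : ∀ ω : Fin d → ℝ, ω ≠ 0 → ∃ i ∈ s, ξ i ⬝ᵥ ω < 0) (hg : ∀ x, 0 ≤ g x)
    (hgc : Continuous g) :
    ∃ γ₀, ∀ γ, hedgedMax ξ f s γ₀ + g γ₀ ≤ hedgedMax ξ f s γ + g γ := by
  obtain ⟨c, hc, hcφ⟩ := exists_pos_mul_norm_le (continuous_hedgedMax (f := 0) hs)
    (fun t ht γ => hedgedMax_zero_smul ht γ) fun ω hω => by
      obtain ⟨i, hi, hiω⟩ := hneg ω hω
      exact lt_of_lt_of_le (by simpa using hiω) (le_hedgedMax (f := 0) hi)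
  obtain ⟨m, hm⟩ := (s.finite_toSet.image f).bddBelow
  have hbound : ∀ γ, m + c * ‖γ‖ ≤ hedgedMax ξ f s γ + g γ := fun γ => by
    linarith [hcφ γ, add_hedgedMax_zero_le (ξ := ξ) hs (fun i hi => hm ⟨i, hi, rfl⟩) γ, hg γ]
  refine Continuous.exists_forall_le ((continuous_hedgedMax hs).add hgc) ?_
  exact tendsto_atTop_mono hbound
    (tendsto_atTop_add_const_left _ m (tendsto_norm_cocompact_atTop.const_mul_atTop hc))

lemma exists_hedgedMax_add_lt (hs : s.Nonempty) (hgc : Continuous g) {γ ω : Fin d → ℝ} {D : ℝ}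
    (hD : Tendsto (fun ε : ℝ => (g (γ + ε • ω) - g γ) / ε) (𝓝[>] 0) (𝓝 D))
    (hω : ∀ i ∈ activeSet ξ f s γ, D < ξ i ⬝ᵥ ω) :
    ∃ γ', hedgedMax ξ f s γ' + g γ' < hedgedMax ξ f s γ + g γ := by
  -- Along `ω` the active payoffs fall at rate `ξ i ⬝ᵥ ω > D` while `g` rises at rate `D`;
  -- the inactive payoffs stay below the maximum for small `ε` by continuity.
  have key : ∀ i ∈ s, ∀ᶠ ε in 𝓝[>] (0 : ℝ),
      f i - ξ i ⬝ᵥ (γ + ε • ω) + g (γ + ε • ω) < hedgedMax ξ f s γ + g γ := by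
    intro i hi
    by_cases hact : f i - ξ i ⬝ᵥ γ = hedgedMax ξ f s γ
    · filter_upwards [hD.eventually_lt_const (hω i (mem_activeSet.2 ⟨hi, hact⟩)),
        self_mem_nhdsWithin] with ε hlt hε
      rw [div_lt_iff₀ hε] at hlt
      rw [dotProduct_add, dotProduct_smul, smul_eq_mul]
      linarith
    · have hlt : f i - ξ i ⬝ᵥ γ + g γ < hedgedMax ξ f s γ + g γ := by
        linarith [lt_of_le_of_ne (le_hedgedMax (γ := γ) hi) hact]
      refine nhdsWithin_le_nhds (Tendsto.eventually_lt_const hlt ?_)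
      exact (Continuous.tendsto' (by fun_prop) _ _ (by simp))
  obtain ⟨ε, hε⟩ := ((eventually_all_finset s).2 key).exists
  obtain ⟨i, hi, hmax⟩ := exists_eq_hedgedMax hs (γ + ε • ω)
  exact ⟨γ + ε • ω, hmax ▸ hε i hi⟩

lemma zero_mem_convexHull_activeSet (hs : s.Nonempty) (hgc : Continuous g)
    {Dg : (Fin d → ℝ) → (Fin d → ℝ) → ℝ}
    (hDg : ∀ x y, Tendsto (fun ε : ℝ => (g (x + ε • y) - g x) / ε) (𝓝[>] 0) (𝓝 (Dg x y)))
    (hdesc : ∀ A : Finset ι, (∃ ω, ∀ i ∈ A, 0 < ω ⬝ᵥ ξ i) →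
      ∃ ω, ∀ i ∈ A, ∀ γ, Dg γ ω < ξ i ⬝ᵥ ω)
    {γ₀ : Fin d → ℝ} (hmin : ∀ γ, hedgedMax ξ f s γ₀ + g γ₀ ≤ hedgedMax ξ f s γ + g γ) :
    (0 : Fin d → ℝ) ∈ convexHull ℝ (ξ '' activeSet ξ f s γ₀) := by
  refine zero_mem_convexHull_of_not_exists_pos ξ _ fun hsep => ?_
  obtain ⟨ω, hω⟩ := hdesc _ hsep
  obtain ⟨γ, hγ⟩ := exists_hedgedMax_add_lt hs hgc (hDg γ₀ ω) fun i hi => hω i hi γ₀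
  exact (hmin γ).not_gt hγ

end Perturbation

section PerturbedSimplex

variable {ι : Type*} [Fintype ι] {d : ℕ} {ξ : ι → Fin d → ℝ} {f : ι → ℝ}
  {g : (Fin d → ℝ) → ℝ} {s : Finset ι}

lemma activeSet_eq_of_card_eq (hk : d ≤ Fintype.card ι)
    (hi : ∀ s : Finset ι, s.card = d → LinearIndependent ℝ (fun i : s => ξ i))
    (hgc : Continuous g) {Dg : (Fin d → ℝ) → (Fin d → ℝ) → ℝ}
    (hDg : ∀ x y, Tendsto (fun ε : ℝ => (g (x + ε • y) - g x) / ε) (𝓝[>] 0) (𝓝 (Dg x y)))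
    (hdesc : ∀ A : Finset ι, (∃ ω, ∀ i ∈ A, 0 < ω ⬝ᵥ ξ i) →
      ∃ ω, ∀ i ∈ A, ∀ γ, Dg γ ω < ξ i ⬝ᵥ ω)
    (hcard : s.card = d + 1) {γ₀ : Fin d → ℝ}
    (hmin : ∀ γ, hedgedMax ξ f s γ₀ + g γ₀ ≤ hedgedMax ξ f s γ + g γ) : activeSet ξ f s γ₀ = s := by
  have hs : s.Nonempty := card_pos.1 (by omega)
  obtain ⟨I, hIA, hIcard, -⟩ := exists_simplex_of_zero_mem_convexHull hk hi
    (zero_mem_convexHull_activeSet hs hgc hDg hdesc hmin)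
  exact eq_of_subset_of_card_le activeSet_subset (hcard ▸ hIcard ▸ card_le_card hIA)

lemma expectation_add_le_of_simplex (hk : d ≤ Fintype.card ι)
    (hi : ∀ s : Finset ι, s.card = d → LinearIndependent ℝ (fun i : s => ξ i))
    (hg : ∀ x, 0 ≤ g x) (hgc : Continuous g) {Dg : (Fin d → ℝ) → (Fin d → ℝ) → ℝ}
    (hDg : ∀ x y, Tendsto (fun ε : ℝ => (g (x + ε • y) - g x) / ε) (𝓝[>] 0) (𝓝 (Dg x y)))
    (hdesc : ∀ A : Finset ι, (∃ ω, ∀ i ∈ A, 0 < ω ⬝ᵥ ξ i) →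
      ∃ ω, ∀ i ∈ A, ∀ γ, Dg γ ω < ξ i ⬝ᵥ ω)
    (hcard : s.card = d + 1) (hint : (0 : Fin d → ℝ) ∈ interior (convexHull ℝ (ξ '' s)))
    {p : ι → ℝ} (hp : IsRiskNeutral ξ s p) {γs : Fin d → ℝ}
    (huniq : ∀ γ', (∀ γ, hedgedMax ξ f s γ' ≤ hedgedMax ξ f s γ) → γ' = γs) (γ : Fin d → ℝ) :
    ∑ i, p i * f i + g γs ≤ hedgedMax ξ f s γ + g γ := by
  obtain ⟨γ₁, hγ₁⟩ := exists_forall_hedgedMax_add_le hp.nonempty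
    (fun ω hω => by
      obtain ⟨_, ⟨i, his, rfl⟩, h⟩ := exists_dotProduct_neg_of_zero_mem_interior hint hω
      exact ⟨i, his, h⟩) hg hgc
  have hs := activeSet_eq_of_card_eq hk hi hgc hDg hdesc hcard hγ₁
  have hact : ∀ i ∈ s, f i - ξ i ⬝ᵥ γ₁ = hedgedMax ξ f s γ₁ := fun i his =>
    (mem_activeSet.1 (hs.symm ▸ his)).2
  obtain rfl := huniq γ₁ (hp.hedgedMax_le_of_forall_eq hact)
  rw [hp.expectation_eq hact]
  exact hγ₁ γ

end PerturbedSimplex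

theorem stmt11_general (d k : ℕ) (hk : d < k) (ξ : Fin k → (Fin d → ℝ)) (f : Fin k → ℝ)
    -- (i): no d of the vectors are linearly dependent
    (hi : ∀ s : Finset (Fin k), s.card = d → LinearIndependent ℝ (fun i : s => ξ i))
    -- (ii): no ω has positive inner product with all the ξᵢ
    (hii : ¬ ∃ ω : Fin d → ℝ, ∀ i, 0 < dotp ω (ξ i))
    (g : (Fin d → ℝ) → ℝ)
    (hg0 : ∀ x, 0 ≤ g x)
    -- g is Lipschitz continuous
    (C : ℝ) (hgLip : ∀ x y, |g x - g y| ≤ C * euclNorm (x - y))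
    -- g has directional derivatives Dg x y at every point x in every direction y
    (Dg : (Fin d → ℝ) → (Fin d → ℝ) → ℝ)
    (hDg : ∀ x y, Filter.Tendsto (fun ε : ℝ => (g (x + ε • y) - g x) / ε)
      (nhdsWithin 0 (Set.Ioi 0)) (nhds (Dg x y)))
    -- for every subfamily not satisfying (ii) one can choose a separating ω dominating Dg
    (hcond : ∀ I : Finset (Fin k), (∃ ω, ∀ i ∈ I, 0 < dotp ω (ξ i)) →
      ∃ ω, (∀ i ∈ I, 0 < dotp ω (ξ i)) ∧ ∀ i ∈ I, ∀ γ : Fin d → ℝ, Dg γ ω < dotp (ξ i) ω) :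
    let F : (Fin d → ℝ) → ℝ := fun γ => ⨆ i, (f i - dotp (ξ i) γ + g γ)
    let Fu : (Fin d → ℝ) → ℝ := fun γ => ⨆ i, (f i - dotp (ξ i) γ)
    (∃ γ₀ : Fin d → ℝ,
      IsLeast (Set.range F) (F γ₀) ∧
      IsGreatest { y : ℝ | ∃ I : Finset (Fin k), I.card = d + 1 ∧
        (0 : Fin d → ℝ) ∈ interior (convexHull ℝ (ξ '' I)) ∧
        ∃ p : Fin k → ℝ, (∀ i, 0 ≤ p i) ∧ (∀ i ∉ I, p i = 0) ∧
          (∑ i, p i = 1) ∧ (∑ i, p i • ξ i = 0) ∧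
          ∃ γI : Fin d → ℝ,
            (∀ γ, (⨆ i : I, (f i - dotp (ξ i) γI)) ≤ ⨆ i : I, (f i - dotp (ξ i) γ)) ∧
            (∀ γ', (∀ γ, (⨆ i : I, (f i - dotp (ξ i) γ')) ≤ ⨆ i : I, (f i - dotp (ξ i) γ))
              → γ' = γI) ∧
            y = (∑ i, p i * f i) + g γI } (F γ₀)) ∧
    -- in particular, for k = d+1 the minimizer is the same as for vanishing g and the
    -- value is the unperturbed value plus g(γ₀)
    (k = d + 1 → ∀ γu : Fin d → ℝ, (∀ γ, Fu γu ≤ Fu γ) →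
      (∀ γ, F γu ≤ F γ) ∧ F γu = Fu γu + g γu) := by
  intro F Fu
  have hk' : d ≤ Fintype.card (Fin k) := by simpa using hk.le
  have : Nonempty (Fin k) := ⟨⟨0, by omega⟩⟩
  have hgc : Continuous g := continuous_of_abs_sub_le_mul_euclNorm hgLip
  have hdesc : ∀ A : Finset (Fin k), (∃ ω, ∀ i ∈ A, 0 < ω ⬝ᵥ ξ i) →
      ∃ ω, ∀ i ∈ A, ∀ γ, Dg γ ω < ξ i ⬝ᵥ ω := fun A hA => (hcond A hA).imp fun _ => And.right
  have hF : ∀ γ, F γ = hedgedMax ξ f univ γ + g γ := fun γ => iSup_add_eq_hedgedMax_add γ (g γ)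
  have hFu : ∀ γ, Fu γ = hedgedMax ξ f univ γ := fun γ => (hedgedMax_univ γ).symm
  obtain ⟨γ₀, hγ₀⟩ := exists_forall_hedgedMax_add_le univ_nonempty (fun ω hω =>
    (exists_dotProduct_neg_of_not_exists_pos hk' hi hii hω).imp fun i h => ⟨mem_univ i, h⟩) hg0 hgc
  obtain ⟨I, hIact, hIcard, hint, q, hq, hqpos⟩ := exists_simplex_of_zero_mem_convexHull hk' hi
    (zero_mem_convexHull_activeSet univ_nonempty hgc hDg hdesc hγ₀)
  have hact : ∀ i ∈ I, f i - ξ i ⬝ᵥ γ₀ = hedgedMax ξ f univ γ₀ := fun i hiI =>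
    (mem_activeSet.1 (hIact hiI)).2
  have huniq : ∀ γ', (∀ γ, hedgedMax ξ f I γ' ≤ hedgedMax ξ f I γ) → γ' = γ₀ := fun γ' hγ' =>
    hq.eq_of_hedgedMax_le_of_forall_eq hi hqpos (by omega) hact (hγ' γ₀)
  have hFmin : ∀ γ, F γ₀ ≤ F γ := fun γ => by rw [hF, hF]; exact hγ₀ γ
  refine ⟨⟨γ₀, ⟨⟨γ₀, rfl⟩, by rintro _ ⟨γ, rfl⟩; exact hFmin γ⟩, ?_, ?_⟩, ?_⟩
  · exact ⟨I, hIcard, hint, q, hq.nonneg, hq.eq_zero_of_notMem, hq.sum_eq_one,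
      hq.sum_smul_eq_zero, γ₀, hq.hedgedMax_le_of_forall_eq hact, huniq,
      by rw [hF, hq.expectation_eq hact]⟩
  · rintro _ ⟨I', hI'card, hint', p, hp0, hpoff, hp1, hpv, γI, -, hγI, rfl⟩
    have hp : IsRiskNeutral ξ I' p := ⟨hp0, hpoff, hp1, hpv⟩
    rw [hF]
    exact (expectation_add_le_of_simplex hk' hi hg0 hgc hDg hdesc hI'card hint' hp hγI γ₀).trans
      (add_le_add_left (hedgedMax_mono hp.nonempty (subset_univ I') γ₀) _)
  · intro hkd γu hγu
    obtain rfl : I = univ := eq_univ_of_card I (by simp [hIcard, hkd])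
    obtain rfl : γu = γ₀ := huniq γu fun γ => by simpa only [hFu] using hγu γ
    exact ⟨hFmin, by rw [hF, hFu]⟩

theorem stmt11 (d k : ℕ) (hk : d < k) (ξ : Fin k → (Fin d → ℝ)) (f : Fin k → ℝ)
    (hne : ∀ i, ξ i ≠ 0)
    -- (i): no d of the vectors are linearly dependent
    (hi : ∀ s : Finset (Fin k), s.card = d → LinearIndependent ℝ (fun i : s => ξ i))
    -- (ii): no ω has positive inner product with all the ξᵢ
    (hii : ¬ ∃ ω : Fin d → ℝ, ∀ i, 0 < dotp ω (ξ i))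
    (g : (Fin d → ℝ) → ℝ)
    (hg0 : ∀ x, 0 ≤ g x)
    -- g is Lipschitz continuous
    (C : ℝ) (hgLip : ∀ x y, |g x - g y| ≤ C * euclNorm (x - y))
    -- g has directional derivatives Dg x y at every point x in every direction y
    (Dg : (Fin d → ℝ) → (Fin d → ℝ) → ℝ)
    (hDg : ∀ x y, Filter.Tendsto (fun ε : ℝ => (g (x + ε • y) - g x) / ε)
      (nhdsWithin 0 (Set.Ioi 0)) (nhds (Dg x y)))
    -- for every subfamily not satisfying (ii) one can choose a separating ω dominating Dg
    (hcond : ∀ I : Finset (Fin k), (∃ ω, ∀ i ∈ I, 0 < dotp ω (ξ i)) →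
      ∃ ω, (∀ i ∈ I, 0 < dotp ω (ξ i)) ∧ ∀ i ∈ I, ∀ γ : Fin d → ℝ, Dg γ ω < dotp (ξ i) ω) :
    let F : (Fin d → ℝ) → ℝ := fun γ => ⨆ i, (f i - dotp (ξ i) γ + g γ)
    let Fu : (Fin d → ℝ) → ℝ := fun γ => ⨆ i, (f i - dotp (ξ i) γ)
    (∃ γ₀ : Fin d → ℝ,
      IsLeast (Set.range F) (F γ₀) ∧
      IsGreatest { y : ℝ | ∃ I : Finset (Fin k), I.card = d + 1 ∧
        (0 : Fin d → ℝ) ∈ interior (convexHull ℝ (ξ '' I)) ∧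
        ∃ p : Fin k → ℝ, (∀ i, 0 ≤ p i) ∧ (∀ i ∉ I, p i = 0) ∧
          (∑ i, p i = 1) ∧ (∑ i, p i • ξ i = 0) ∧
          ∃ γI : Fin d → ℝ,
            (∀ γ, (⨆ i : I, (f i - dotp (ξ i) γI)) ≤ ⨆ i : I, (f i - dotp (ξ i) γ)) ∧
            (∀ γ', (∀ γ, (⨆ i : I, (f i - dotp (ξ i) γ')) ≤ ⨆ i : I, (f i - dotp (ξ i) γ))
              → γ' = γI) ∧
            y = (∑ i, p i * f i) + g γI } (F γ₀)) ∧
    -- in particular, for k = d+1 the minimizer is the same as for vanishing g and the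
    -- value is the unperturbed value plus g(γ₀)
    (k = d + 1 → ∀ γu : Fin d → ℝ, (∀ γ, Fu γu ≤ Fu γ) →
      (∀ γ, F γu ≤ F γ) ∧ F γu = Fu γu + g γu) :=
  stmt11_general d k hk ξ f hi hii g hg0 C hgLip Dg hDg hcond
end
end
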